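/- arXiv:0810.3286 — 6 statements merged into one kernel-verified Lean document; each statement's English description precedes it below -/
import Mathlib

section
/- Let Y ∈ ℝ^{n₁×n₂} have SVD decomposed as Y = U₀Σ₀V₀* + U₁Σ₁V₁*, where U₀, V₀ collect the singular vectors associated with singular values strictly greater than τ > 0 and U₁, V₁ those associated with singular values at most τ. Then with X̂ := U₀(Σ₀ − τI)V₀* = D_τ(Y), the matrix W := τ⁻¹ U₁Σ₁V₁* satisfies U₀*W = 0, W V₀ = 0, and ‖W‖₂ ≤ 1, and hence Y − X̂ = τ(U₀V₀* + W) belongs to τ·∂‖X̂‖_*. -/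
open Matrix Filter Topology

noncomputable def frob {n₁ n₂ : ℕ} (X : Matrix (Fin n₁) (Fin n₂) ℝ) : ℝ :=
  Real.sqrt (∑ i, ∑ j, (X i j) ^ 2)

noncomputable def mInner {n₁ n₂ : ℕ} (X Y : Matrix (Fin n₁) (Fin n₂) ℝ) : ℝ :=
  ∑ i, ∑ j, X i j * Y i j

noncomputable def singVal {n₁ n₂ : ℕ} (X : Matrix (Fin n₁) (Fin n₂) ℝ) (j : Fin n₂) : ℝ :=
  Real.sqrt ((Matrix.isHermitian_conjTranspose_mul_self X).eigenvalues j)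

noncomputable def nuclearNorm {n₁ n₂ : ℕ} (X : Matrix (Fin n₁) (Fin n₂) ℝ) : ℝ :=
  ∑ j, singVal X j

noncomputable def specNorm {n₁ n₂ : ℕ} (X : Matrix (Fin n₁) (Fin n₂) ℝ) : ℝ :=
  ⨆ j, singVal X j

noncomputable def ftau {n₁ n₂ : ℕ} (τ : ℝ) (X : Matrix (Fin n₁) (Fin n₂) ℝ) : ℝ :=
  τ * nuclearNorm X + (1 / 2) * frob X ^ 2

def projSet {n₁ n₂ : ℕ} (Ω : Finset (Fin n₁ × Fin n₂)) (X : Matrix (Fin n₁) (Fin n₂) ℝ) :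
    Matrix (Fin n₁) (Fin n₂) ℝ :=
  Matrix.of fun i j => if (i, j) ∈ Ω then X i j else 0

def IsSubgradAt {n₁ n₂ : ℕ} (f : Matrix (Fin n₁) (Fin n₂) ℝ → ℝ)
    (Z X₀ : Matrix (Fin n₁) (Fin n₂) ℝ) : Prop :=
  ∀ X, f X₀ + mInner Z (X - X₀) ≤ f X

noncomputable def eNorm {m : ℕ} (v : Fin m → ℝ) : ℝ := Real.sqrt (∑ i, v i ^ 2)

noncomputable def eInner {m : ℕ} (v w : Fin m → ℝ) : ℝ := ∑ i, v i * w i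

/-! The residual of shrinkage is `Y - X̂ = τ Z` with
`Z = U₀V₀ᵀ + W = [U₀ U₁] diag(1, Σ₁/τ) [V₀ V₁]ᵀ`, an operator-norm contraction because the middle
factor has entries in `[0, 1]`. Expanding the Frobenius pairing `⟨Z, X⟩` in an orthonormal
eigenbasis `q_j` of `XᵀX` and applying Cauchy–Schwarz gives `⟨Z, X⟩ ≤ ∑ ‖X q_j‖ = ‖X‖_*` for
every `X`, with equality at `X̂` because `Zᵀ X̂ = V₀(Σ₀ - τ)V₀ᵀ` is the positive square root of
`X̂ᵀ X̂`. These two facts say that `Z` is a subgradient of the nuclear norm at `X̂`. -/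

open scoped Matrix.Norms.L2Operator RealInnerProductSpace
open WithLp (toLp ofLp)

namespace Matrix

section OperatorNorm

variable {m n r : Type*} [Fintype m] [Fintype n] [Fintype r] [DecidableEq n] [DecidableEq r]

theorem inner_toEuclideanLin_toEuclideanLin (A B : Matrix m n ℝ) (x y : EuclideanSpace ℝ n) :
    ⟪toEuclideanLin A x, toEuclideanLin B y⟫ = ofLp x ⬝ᵥ (Aᵀ * B) *ᵥ ofLp y := by
  simp only [toLpLin_apply, EuclideanSpace.inner_eq_star_dotProduct, star_trivial]
  rw [← mulVec_mulVec, dotProduct_mulVec, ← mulVec_transpose, dotProduct_comm]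

theorem norm_toEuclideanLin_le (A : Matrix m n ℝ) (x : EuclideanSpace ℝ n) :
    ‖toEuclideanLin A x‖ ≤ ‖A‖ * ‖x‖ :=
  l2_opNorm_mulVec A x

theorem l2_opNorm_le_one_of_transpose_mul_self_eq_one {U : Matrix m r ℝ} (hU : Uᵀ * U = 1) :
    ‖U‖ ≤ 1 := by
  have h : ‖U‖ * ‖U‖ ≤ 1 := by
    rw [← l2_opNorm_conjTranspose_mul_self, conjTranspose_eq_transpose_of_trivial, hU,
      ← diagonal_one, l2_opNorm_diagonal]
    exact (pi_norm_le_iff_of_nonneg zero_le_one).2 fun _ => by simp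
  nlinarith [norm_nonneg U]

theorem l2_opNorm_mul_diagonal_mul_transpose_le_one {U : Matrix m r ℝ} {V : Matrix n r ℝ}
    {d : r → ℝ} (hU : Uᵀ * U = 1) (hV : Vᵀ * V = 1) (hd : ∀ i, |d i| ≤ 1) :
    ‖U * diagonal d * Vᵀ‖ ≤ 1 := by
  have hD : ‖(diagonal d : Matrix r r ℝ)‖ ≤ 1 := by
    rw [l2_opNorm_diagonal]
    exact (pi_norm_le_iff_of_nonneg zero_le_one).2 fun i => by simpa using hd i
  have hVt : ‖Vᵀ‖ ≤ 1 := by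
    rw [← conjTranspose_eq_transpose_of_trivial, l2_opNorm_conjTranspose]
    exact l2_opNorm_le_one_of_transpose_mul_self_eq_one hV
  calc ‖U * diagonal d * Vᵀ‖ ≤ ‖U‖ * ‖(diagonal d : Matrix r r ℝ)‖ * ‖Vᵀ‖ :=
        (l2_opNorm_mul _ _).trans (by gcongr; exact l2_opNorm_mul _ _)
    _ ≤ 1 * 1 * 1 := by
        gcongr
        exact l2_opNorm_le_one_of_transpose_mul_self_eq_one hU
    _ = 1 := by norm_num

end OperatorNorm

section Blocks

variable {R m n r₀ r₁ : Type*} [CommRing R] [DecidableEq r₀] [DecidableEq r₁]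

theorem transpose_fromCols_mul_fromCols_eq_one [Fintype m] {U₀ : Matrix m r₀ R}
    {U₁ : Matrix m r₁ R} (h₀ : U₀ᵀ * U₀ = 1) (h₁ : U₁ᵀ * U₁ = 1) (h₀₁ : U₀ᵀ * U₁ = 0) :
    (fromCols U₀ U₁)ᵀ * fromCols U₀ U₁ = 1 := by
  have h₁₀ : U₁ᵀ * U₀ = 0 := by
    rw [← transpose_transpose (U₁ᵀ * U₀), transpose_mul, transpose_transpose, h₀₁, transpose_zero]
  rw [transpose_fromCols, fromRows_mul_fromCols, h₀, h₁, h₀₁, h₁₀, fromBlocks_one]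

theorem fromCols_mul_diagonal_mul_transpose_fromCols [Fintype r₀] [Fintype r₁]
    (U₀ : Matrix m r₀ R) (U₁ : Matrix m r₁ R) (V₀ : Matrix n r₀ R) (V₁ : Matrix n r₁ R)
    (d₀ : r₀ → R) (d₁ : r₁ → R) :
    fromCols U₀ U₁ * diagonal (Sum.elim d₀ d₁) * (fromCols V₀ V₁)ᵀ =
      U₀ * diagonal d₀ * V₀ᵀ + U₁ * diagonal d₁ * V₁ᵀ := by
  rw [← fromBlocks_diagonal, fromCols_mul_fromBlocks, transpose_fromCols, fromCols_mul_fromRows]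
  simp

theorem mul_diagonal_sub_const_mul_transpose [Fintype r₀] (U : Matrix m r₀ R) (V : Matrix n r₀ R)
    (σ : r₀ → R) (τ : R) :
    U * diagonal (fun i => σ i - τ) * Vᵀ = U * diagonal σ * Vᵀ - τ • (U * Vᵀ) := by
  have hshift : diagonal (fun i => σ i - τ) = diagonal σ - τ • 1 := by
    rw [← diagonal_one, ← diagonal_smul, diagonal_sub]
    simp
  rw [hshift, Matrix.mul_sub, Matrix.sub_mul, Matrix.mul_smul, Matrix.mul_one, Matrix.smul_mul]

end Blocks

theorem l2_opNorm_mul_diagonal_mul_transpose_add_le_one {m n r₀ r₁ : Type*} [Fintype m]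
    [Fintype n] [Fintype r₀] [Fintype r₁] [DecidableEq n] [DecidableEq r₀] [DecidableEq r₁]
    {U₀ : Matrix m r₀ ℝ} {U₁ : Matrix m r₁ ℝ} {V₀ : Matrix n r₀ ℝ} {V₁ : Matrix n r₁ ℝ}
    {d₀ : r₀ → ℝ} {d₁ : r₁ → ℝ} (hU₀ : U₀ᵀ * U₀ = 1) (hU₁ : U₁ᵀ * U₁ = 1) (hU₀₁ : U₀ᵀ * U₁ = 0)
    (hV₀ : V₀ᵀ * V₀ = 1) (hV₁ : V₁ᵀ * V₁ = 1) (hV₀₁ : V₀ᵀ * V₁ = 0) (hd₀ : ∀ i, |d₀ i| ≤ 1)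
    (hd₁ : ∀ i, |d₁ i| ≤ 1) :
    ‖U₀ * diagonal d₀ * V₀ᵀ + U₁ * diagonal d₁ * V₁ᵀ‖ ≤ 1 := by
  rw [← fromCols_mul_diagonal_mul_transpose_fromCols]
  refine l2_opNorm_mul_diagonal_mul_transpose_le_one
    (transpose_fromCols_mul_fromCols_eq_one hU₀ hU₁ hU₀₁)
    (transpose_fromCols_mul_fromCols_eq_one hV₀ hV₁ hV₀₁) ?_
  rintro (i | i)
  exacts [hd₀ i, hd₁ i]

theorem PosSemidef.dotProduct_mulVec_eq_sqrt_mul {n : Type*} [Fintype n] {P : Matrix n n ℝ}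
    (hP : P.PosSemidef) {q : n → ℝ} {μ : ℝ} (hq : (P * P) *ᵥ q = μ • q) :
    q ⬝ᵥ P *ᵥ q = √μ * (q ⬝ᵥ q) := by
  have hPt : Pᵀ = P := by rw [← conjTranspose_eq_transpose_of_trivial, hP.isHermitian.eq]
  have hnorm : (P *ᵥ q) ⬝ᵥ (P *ᵥ q) = μ * (q ⬝ᵥ q) := by
    rw [dotProduct_comm, dotProduct_mulVec, ← mulVec_transpose, hPt, mulVec_mulVec, hq,
      smul_dotProduct, smul_eq_mul]
  have hsq (v : n → ℝ) : 0 ≤ v ⬝ᵥ v := by simpa using dotProduct_star_self_nonneg v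
  rcases le_or_gt μ 0 with hμ | hμ
  · have hPq : P *ᵥ q = 0 := by
      refine dotProduct_self_eq_zero.1 (le_antisymm ?_ (hsq _))
      rw [hnorm]
      exact mul_nonpos_of_nonpos_of_nonneg hμ (hsq q)
    rw [hPq, Real.sqrt_eq_zero'.2 hμ, dotProduct_zero, zero_mul]
  · set s := √μ
    have hs : 0 < s := Real.sqrt_pos.2 hμ
    -- `u := Pq - s q` satisfies `(P + s) u = (P² - μ) q = 0`, which forces `u = 0` since `P ≥ 0`.
    set u := P *ᵥ q - s • q
    have hu : P *ᵥ u = -(s • u) := by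
      have : s * s = μ := Real.mul_self_sqrt hμ.le
      rw [mulVec_sub, mulVec_smul, mulVec_mulVec, hq, ← this, mul_smul]
      module
    have hu0 : u = 0 := by
      have hPu : 0 ≤ u ⬝ᵥ P *ᵥ u := by simpa using hP.dotProduct_mulVec_nonneg u
      rw [hu, dotProduct_neg, dotProduct_smul, smul_eq_mul] at hPu
      have := hsq u
      exact dotProduct_self_eq_zero.1 (by nlinarith)
    have hPq : P *ᵥ q = s • q := sub_eq_zero.1 hu0
    rw [hPq, dotProduct_smul, smul_eq_mul]

end Matrix

section SingularValues

variable {n₁ n₂ : ℕ}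

noncomputable def rightSingularBasis (X : Matrix (Fin n₁) (Fin n₂) ℝ) :
    OrthonormalBasis (Fin n₂) ℝ (EuclideanSpace ℝ (Fin n₂)) :=
  (isHermitian_conjTranspose_mul_self X).eigenvectorBasis

theorem transpose_mul_self_mulVec_rightSingularBasis (X : Matrix (Fin n₁) (Fin n₂) ℝ)
    (j : Fin n₂) :
    (Xᵀ * X) *ᵥ ofLp (rightSingularBasis X j) =
      (isHermitian_conjTranspose_mul_self X).eigenvalues j • ofLp (rightSingularBasis X j) :=
  (isHermitian_conjTranspose_mul_self X).mulVec_eigenvectorBasis j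

theorem dotProduct_ofLp_rightSingularBasis_self (X : Matrix (Fin n₁) (Fin n₂) ℝ) (j : Fin n₂) :
    ofLp (rightSingularBasis X j) ⬝ᵥ ofLp (rightSingularBasis X j) = 1 := by
  have h := real_inner_self_eq_norm_sq (rightSingularBasis X j)
  rwa [(rightSingularBasis X).orthonormal.1 j, one_pow, EuclideanSpace.inner_eq_star_dotProduct,
    star_trivial] at h

theorem singVal_eq_norm (X : Matrix (Fin n₁) (Fin n₂) ℝ) (j : Fin n₂) :
    singVal X j = ‖toEuclideanLin X (rightSingularBasis X j)‖ := by
  have h : ‖toEuclideanLin X (rightSingularBasis X j)‖ ^ 2 =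
      (isHermitian_conjTranspose_mul_self X).eigenvalues j := by
    rw [← real_inner_self_eq_norm_sq, inner_toEuclideanLin_toEuclideanLin,
      transpose_mul_self_mulVec_rightSingularBasis, dotProduct_smul,
      dotProduct_ofLp_rightSingularBasis_self, smul_eq_mul, mul_one]
  rw [singVal, ← h, Real.sqrt_sq (norm_nonneg _)]

theorem mInner_eq_sum_inner (B C : Matrix (Fin n₁) (Fin n₂) ℝ) {ι : Type*} [Fintype ι]
    (b : OrthonormalBasis ι ℝ (EuclideanSpace ℝ (Fin n₂))) :
    mInner B C = ∑ j, ⟪toEuclideanLin B (b j), toEuclideanLin C (b j)⟫ := by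
  have hrow (A : Matrix (Fin n₁) (Fin n₂) ℝ) (x : EuclideanSpace ℝ (Fin n₂)) (i : Fin n₁) :
      toEuclideanLin A x i = ⟪toLp 2 (A i), x⟫ := by
    simp [toLpLin_apply, mulVec, EuclideanSpace.inner_eq_star_dotProduct, dotProduct_comm]
  calc mInner B C = ∑ i, ⟪toLp 2 (B i), toLp 2 (C i)⟫ := by
        simp [mInner, EuclideanSpace.inner_eq_star_dotProduct, dotProduct, mul_comm]
    _ = ∑ i, ∑ j, ⟪toLp 2 (B i), b j⟫ * ⟪b j, toLp 2 (C i)⟫ := by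
        simp_rw [b.sum_inner_mul_inner]
    _ = ∑ j, ∑ i, toEuclideanLin B (b j) i * toEuclideanLin C (b j) i := by
        rw [Finset.sum_comm]
        simp only [hrow, real_inner_comm (b _)]
    _ = _ := by
        simp [PiLp.inner_apply, mul_comm]

theorem specNorm_le_l2_opNorm (X : Matrix (Fin n₁) (Fin n₂) ℝ) : specNorm X ≤ ‖X‖ := by
  refine Real.iSup_le (fun j => ?_) (norm_nonneg X)
  rw [singVal_eq_norm]
  simpa [(rightSingularBasis X).orthonormal.1 j] using
    norm_toEuclideanLin_le X (rightSingularBasis X j)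

theorem mInner_le_nuclearNorm {Z : Matrix (Fin n₁) (Fin n₂) ℝ} (hZ : ‖Z‖ ≤ 1)
    (X : Matrix (Fin n₁) (Fin n₂) ℝ) : mInner Z X ≤ nuclearNorm X := by
  rw [mInner_eq_sum_inner Z X (rightSingularBasis X), nuclearNorm]
  refine Finset.sum_le_sum fun j _ => ?_
  set q := rightSingularBasis X j
  have hZq : ‖toEuclideanLin Z q‖ ≤ 1 := by
    simpa [q, (rightSingularBasis X).orthonormal.1 j] using
      (norm_toEuclideanLin_le Z q).trans (mul_le_mul_of_nonneg_right hZ (norm_nonneg q))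
  calc ⟪toEuclideanLin Z q, toEuclideanLin X q⟫
      ≤ ‖toEuclideanLin Z q‖ * ‖toEuclideanLin X q‖ := real_inner_le_norm _ _
    _ ≤ 1 * ‖toEuclideanLin X q‖ := by gcongr
    _ = singVal X j := by rw [one_mul, singVal_eq_norm]

theorem mInner_eq_nuclearNorm_of_transpose_mul_eq {Z X : Matrix (Fin n₁) (Fin n₂) ℝ}
    {P : Matrix (Fin n₂) (Fin n₂) ℝ} (hP : P.PosSemidef) (hPP : P * P = Xᵀ * X)
    (hZX : Zᵀ * X = P) : mInner Z X = nuclearNorm X := by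
  rw [mInner_eq_sum_inner Z X (rightSingularBasis X), nuclearNorm]
  refine Finset.sum_congr rfl fun j _ => ?_
  have hq := transpose_mul_self_mulVec_rightSingularBasis X j
  rw [← hPP] at hq
  rw [inner_toEuclideanLin_toEuclideanLin, hZX, hP.dotProduct_mulVec_eq_sqrt_mul hq,
    dotProduct_ofLp_rightSingularBasis_self, mul_one, singVal]

theorem mInner_sub (Z X Y : Matrix (Fin n₁) (Fin n₂) ℝ) :
    mInner Z (X - Y) = mInner Z X - mInner Z Y := by
  simp only [mInner, Matrix.sub_apply, mul_sub, Finset.sum_sub_distrib]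

theorem isSubgradAt_nuclearNorm {Z X₀ : Matrix (Fin n₁) (Fin n₂) ℝ} (hZ : ‖Z‖ ≤ 1)
    (hZX₀ : mInner Z X₀ = nuclearNorm X₀) : IsSubgradAt nuclearNorm Z X₀ := fun X => by
  rw [mInner_sub, hZX₀]
  linarith [mInner_le_nuclearNorm hZ X]

theorem isSubgradAt_nuclearNorm_mul_diagonal_mul_transpose {r : Type*} [Fintype r] [DecidableEq r]
    {U : Matrix (Fin n₁) r ℝ} {V : Matrix (Fin n₂) r ℝ} {d : r → ℝ} (hU : Uᵀ * U = 1)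
    (hV : Vᵀ * V = 1) (hd : ∀ i, 0 ≤ d i) {Z : Matrix (Fin n₁) (Fin n₂) ℝ} (hZ : ‖Z‖ ≤ 1)
    (hZU : Zᵀ * U = V) : IsSubgradAt nuclearNorm Z (U * diagonal d * Vᵀ) := by
  refine isSubgradAt_nuclearNorm hZ (mInner_eq_nuclearNorm_of_transpose_mul_eq
    (P := V * diagonal d * Vᵀ) ?_ ?_ ?_)
  · rw [← conjTranspose_eq_transpose_of_trivial]
    exact (PosSemidef.diagonal fun i => hd i).mul_mul_conjTranspose_same V
  · simp only [transpose_mul, transpose_transpose, diagonal_transpose, Matrix.mul_assoc]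
    rw [← Matrix.mul_assoc Uᵀ, hU, ← Matrix.mul_assoc Vᵀ, hV, Matrix.one_mul]
  · rw [← Matrix.mul_assoc, ← Matrix.mul_assoc, hZU]

end SingularValues

/-- Decompose the SVD of `Y` as `Y = U₀Σ₀V₀ᵀ + U₁Σ₁V₁ᵀ`, singular values `> τ`
in the first block and `≤ τ` in the second. With `X̂ = U₀(Σ₀ - τI)V₀ᵀ = D_τ(Y)` and
`W = τ⁻¹U₁Σ₁V₁ᵀ`, one has `U₀ᵀW = 0`, `WV₀ = 0`, `‖W‖₂ ≤ 1`, and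
`Y - X̂ = τ(U₀V₀ᵀ + W) ∈ τ·∂‖X̂‖_*`. -/
theorem shrinkage_subgradient (n₁ n₂ r₀ r₁ : ℕ) (τ : ℝ) (hτ : 0 < τ)
    (U₀ : Matrix (Fin n₁) (Fin r₀) ℝ) (V₀ : Matrix (Fin n₂) (Fin r₀) ℝ) (σ₀ : Fin r₀ → ℝ)
    (U₁ : Matrix (Fin n₁) (Fin r₁) ℝ) (V₁ : Matrix (Fin n₂) (Fin r₁) ℝ) (σ₁ : Fin r₁ → ℝ)
    (hσ₀ : ∀ i, τ < σ₀ i) (hσ₁ : ∀ i, 0 < σ₁ i ∧ σ₁ i ≤ τ)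
    (hU₀ : U₀ᵀ * U₀ = 1) (hU₁ : U₁ᵀ * U₁ = 1) (hU01 : U₀ᵀ * U₁ = 0)
    (hV₀ : V₀ᵀ * V₀ = 1) (hV₁ : V₁ᵀ * V₁ = 1) (hV01 : V₀ᵀ * V₁ = 0)
    (Y : Matrix (Fin n₁) (Fin n₂) ℝ)
    (hY : Y = U₀ * Matrix.diagonal σ₀ * V₀ᵀ + U₁ * Matrix.diagonal σ₁ * V₁ᵀ)
    (Xhat W : Matrix (Fin n₁) (Fin n₂) ℝ)
    (hXhat : Xhat = U₀ * Matrix.diagonal (fun i => σ₀ i - τ) * V₀ᵀ)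
    (hW : W = τ⁻¹ • (U₁ * Matrix.diagonal σ₁ * V₁ᵀ)) :
    U₀ᵀ * W = 0 ∧ W * V₀ = 0 ∧ specNorm W ≤ 1 ∧
    Y - Xhat = τ • (U₀ * V₀ᵀ + W) ∧
    IsSubgradAt nuclearNorm (U₀ * V₀ᵀ + W) Xhat := by
  have hW_diag : W = U₁ * diagonal (τ⁻¹ • σ₁) * V₁ᵀ := by
    rw [hW, diagonal_smul, Matrix.mul_smul, Matrix.smul_mul]
  have hscaled : ∀ i, |(τ⁻¹ • σ₁) i| ≤ 1 := fun i => by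
    obtain ⟨hpos, hle⟩ := hσ₁ i
    rw [Pi.smul_apply, smul_eq_mul, abs_of_pos (by positivity)]
    exact inv_mul_le_one_of_le₀ hle hτ.le
  have hZnorm : ‖U₀ * V₀ᵀ + W‖ ≤ 1 := by
    have h := l2_opNorm_mul_diagonal_mul_transpose_add_le_one hU₀ hU₁ hU01 hV₀ hV₁ hV01
      (d₀ := fun _ => 1) (by simp) hscaled
    rwa [diagonal_one, Matrix.mul_one, ← hW_diag] at h
  have hU₀W : U₀ᵀ * W = 0 := by
    rw [hW_diag, ← Matrix.mul_assoc, ← Matrix.mul_assoc, hU01, Matrix.zero_mul, Matrix.zero_mul]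
  have hWV₀ : W * V₀ = 0 := by
    have hV₁₀ : V₁ᵀ * V₀ = 0 := by simpa using congrArg transpose hV01
    rw [hW_diag, Matrix.mul_assoc, hV₁₀, Matrix.mul_zero]
  refine ⟨hU₀W, hWV₀, ?_, ?_, ?_⟩
  · exact (specNorm_le_l2_opNorm W).trans
      (hW_diag ▸ l2_opNorm_mul_diagonal_mul_transpose_le_one hU₁ hV₁ hscaled)
  · rw [hY, hXhat, mul_diagonal_sub_const_mul_transpose, smul_add, hW, smul_smul,
      mul_inv_cancel₀ hτ.ne', one_smul]
    abel
  · have hZU₀ : (U₀ * V₀ᵀ + W)ᵀ * U₀ = V₀ := by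
      have hWU₀ : Wᵀ * U₀ = 0 := by simpa using congrArg transpose hU₀W
      rw [transpose_add, Matrix.add_mul, hWU₀, add_zero, transpose_mul, transpose_transpose,
        Matrix.mul_assoc, hU₀, Matrix.mul_one]
    rw [hXhat]
    exact isSubgradAt_nuclearNorm_mul_diagonal_mul_transpose hU₀ hV₀
      (fun i => (sub_pos.2 (hσ₀ i)).le) hZnorm hZU₀
end

section
/- For any matrix Y ∈ ℝ^{n₁×n₂}, fixed τ > 0, fixed M ∈ ℝ^{n₁×n₂}, and sampled set Ω, the minimizer over X of f_τ(X) + ⟨Y, P_Ω(M − X)⟩ coincides with the minimizer over X of τ‖X‖_* + (1/2)‖X − P_Ω(Y)‖_F², and hence equals D_τ(P_Ω(Y)). -/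
/-!
Since `⟨Y, P_Ω X⟩ = ⟨P_Ω Y, X⟩`, completing the square shows that `f_τ(X) + ⟨Y, P_Ω(M - X)⟩`
and `g(X) = τ‖X‖_* + ½‖X - P_Ω Y‖_F²` differ by a constant. With `P_Ω Y = U Σ Vᵀ` and
`D = U (Σ - τ)₊ Vᵀ`, the matrix `W = P_Ω Y - D = U min(Σ, τ) Vᵀ` has spectral norm at most `τ`,
so `⟨W, X⟩ ≤ τ‖X‖_*` for every `X` (trace duality, from an SVD of `X` and Bessel's inequality),
while `⟨W, D⟩ = τ ∑ (σᵢ - τ)₊ ≥ τ‖D‖_*`. Thus `W` is a subgradient of `τ‖·‖_*` at `D`, and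
expanding the square gives `g(X) ≥ g(D) + ½‖X - D‖_F²`: `D` is the unique minimizer.
-/

open Matrix Filter Topology

section Frobenius
variable {n₁ n₂ : ℕ}

lemma frob_sq (X : Matrix (Fin n₁) (Fin n₂) ℝ) : frob X ^ 2 = ∑ i, ∑ j, X i j ^ 2 :=
  Real.sq_sqrt (by positivity)

lemma eq_zero_of_frob_sq_eq_zero {X : Matrix (Fin n₁) (Fin n₂) ℝ} (hX : frob X ^ 2 = 0) :
    X = 0 := by
  rw [frob_sq] at hX
  ext i j
  have hrow := (Fintype.sum_eq_zero_iff_of_nonneg fun i => by positivity).mp hX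
  have hij := (Fintype.sum_eq_zero_iff_of_nonneg fun j => sq_nonneg (X i j)).mp (congrFun hrow i)
  exact pow_eq_zero_iff two_ne_zero |>.mp (congrFun hij j)

lemma mInner_eq_trace (X Y : Matrix (Fin n₁) (Fin n₂) ℝ) : mInner X Y = (Xᵀ * Y).trace := by
  simp only [mInner, trace, diag_apply, mul_apply, transpose_apply]
  exact Finset.sum_comm

lemma mInner_sub_right (W X D : Matrix (Fin n₁) (Fin n₂) ℝ) :
    mInner W (X - D) = mInner W X - mInner W D := by
  simp only [mInner, Matrix.sub_apply, mul_sub, Finset.sum_sub_distrib]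

lemma frob_sub_sq_eq (X A D : Matrix (Fin n₁) (Fin n₂) ℝ) :
    frob (X - A) ^ 2 = frob (X - D) ^ 2 + frob (D - A) ^ 2 - 2 * mInner (A - D) (X - D) := by
  simp only [frob_sq, mInner, Matrix.sub_apply, Finset.mul_sum, ← Finset.sum_add_distrib,
    ← Finset.sum_sub_distrib]
  exact Finset.sum_congr rfl fun i _ => Finset.sum_congr rfl fun j _ => by ring

end Frobenius

section Gram

variable {m r : Type*} [Fintype m] [DecidableEq r]

def HasContractiveOrthogonalColumns (U : Matrix m r ℝ) : Prop :=
  ∃ e : r → ℝ, Uᵀ * U = diagonal e ∧ ∀ i, e i ≤ 1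

theorem HasContractiveOrthogonalColumns.of_transpose_mul_self_eq_one
    {U : Matrix m r ℝ} (hU : Uᵀ * U = 1) : HasContractiveOrthogonalColumns U :=
  ⟨fun _ => 1, by rw [hU, diagonal_one], fun _ => le_rfl⟩

lemma HasContractiveOrthogonalColumns.of_transpose_mul_self_eq_diagonal_ite
    {P : Matrix m r ℝ} {s : r → ℝ}
    (hP : Pᵀ * P = diagonal (fun j => if s j = 0 then 0 else 1)) :
    HasContractiveOrthogonalColumns P :=
  ⟨_, hP, fun j => by split_ifs <;> norm_num⟩

theorem HasContractiveOrthogonalColumns.transpose_mulVec_dotProduct_self_le [Fintype r]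
    {U : Matrix m r ℝ} (hU : HasContractiveOrthogonalColumns U) (x : m → ℝ) :
    (Uᵀ *ᵥ x) ⬝ᵥ (Uᵀ *ᵥ x) ≤ x ⬝ᵥ x := by
  obtain ⟨e, hUe, he⟩ := hU
  set z := Uᵀ *ᵥ x
  have hcross : x ⬝ᵥ (U *ᵥ z) = z ⬝ᵥ z := by
    rw [dotProduct_mulVec, ← mulVec_transpose]
  have hproj : (U *ᵥ z) ⬝ᵥ (U *ᵥ z) ≤ z ⬝ᵥ z := by
    rw [dotProduct_mulVec, ← mulVec_transpose, mulVec_mulVec, hUe]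
    simp only [mulVec_diagonal, dotProduct]
    exact Finset.sum_le_sum fun i _ => by nlinarith [he i, mul_self_nonneg (z i)]
  -- Bessel: `0 ≤ ‖x - U z‖²`
  have hnonneg := dotProduct_self_star_nonneg (x - U *ᵥ z)
  simp only [star_trivial, sub_dotProduct, dotProduct_sub, dotProduct_comm (U *ᵥ z) x] at hnonneg
  linarith

theorem HasContractiveOrthogonalColumns.sum_sq_transpose_mul_le [Fintype r]
    {n : Type*} [Fintype n] [DecidableEq n]
    {U : Matrix m r ℝ} {P : Matrix m n ℝ} (hU : HasContractiveOrthogonalColumns U)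
    (hP : HasContractiveOrthogonalColumns P) (j : n) : ∑ i, (Uᵀ * P) i j ^ 2 ≤ 1 := by
  obtain ⟨e, hPe, he⟩ := hP
  have hcol := hU.transpose_mulVec_dotProduct_self_le (fun k => P k j)
  have hPjj := congrFun (congrFun hPe j) j
  simp only [mul_apply, transpose_apply, diagonal_apply_eq] at hPjj
  simp only [dotProduct, mulVec, transpose_apply] at hcol
  simp only [mul_apply, transpose_apply, sq]
  linarith [he j]

end Gram

section SVD
variable {n₁ n₂ : ℕ}

lemma sq_singVal (X : Matrix (Fin n₁) (Fin n₂) ℝ) (j : Fin n₂) :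
    singVal X j ^ 2 = (isHermitian_conjTranspose_mul_self X).eigenvalues j :=
  Real.sq_sqrt ((posSemidef_conjTranspose_mul_self X).eigenvalues_nonneg j)

lemma exists_orthogonal_diagonalizing_gram (X : Matrix (Fin n₁) (Fin n₂) ℝ) :
    ∃ Q : Matrix (Fin n₂) (Fin n₂) ℝ, Qᵀ * Q = 1 ∧
      (X * Q)ᵀ * (X * Q) = diagonal (fun j => singVal X j ^ 2) := by
  set H := isHermitian_conjTranspose_mul_self X
  set Q : Matrix (Fin n₂) (Fin n₂) ℝ := ↑H.eigenvectorUnitary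
  have hstar : star Q = Qᵀ := by rw [star_eq_conjTranspose, conjTranspose_eq_transpose_of_trivial]
  refine ⟨Q, hstar ▸ Unitary.coe_star_mul_self H.eigenvectorUnitary, ?_⟩
  have h := H.conjStarAlgAut_star_eigenvectorUnitary
  rw [Unitary.conjStarAlgAut_star_apply, hstar] at h
  calc (X * Q)ᵀ * (X * Q) = Qᵀ * (Xᴴ * X) * Q := by
        rw [conjTranspose_eq_transpose_of_trivial, transpose_mul]; simp only [Matrix.mul_assoc]
    _ = diagonal (RCLike.ofReal ∘ H.eigenvalues) := h
    _ = diagonal (fun j => singVal X j ^ 2) := by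
        congr 1; ext j; exact (sq_singVal X j).symm

theorem exists_svd (X : Matrix (Fin n₁) (Fin n₂) ℝ) :
    ∃ (P : Matrix (Fin n₁) (Fin n₂) ℝ) (Q : Matrix (Fin n₂) (Fin n₂) ℝ),
      Pᵀ * P = diagonal (fun j => if singVal X j = 0 then 0 else 1) ∧ Qᵀ * Q = 1 ∧
      X = P * diagonal (singVal X) * Qᵀ := by
  obtain ⟨Q, hQ, hXQ⟩ := exists_orthogonal_diagonalizing_gram X
  set s := singVal X
  have gram : ∀ d, (X * Q * diagonal d)ᵀ * (X * Q * diagonal d) =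
      diagonal (fun j => d j * (s j ^ 2 * d j)) := fun d => by
    rw [transpose_mul, diagonal_transpose, Matrix.mul_assoc, ← Matrix.mul_assoc _ (X * Q), hXQ,
      diagonal_mul_diagonal, diagonal_mul_diagonal]
  -- `0⁻¹ = 0`: the columns of `P` where `s` vanishes are zero
  refine ⟨X * Q * diagonal s⁻¹, Q, ?_, hQ, ?_⟩
  · rw [gram]; congr 1; ext j
    by_cases h : s j = 0 <;> simp [h]; field_simp
  · have hker : X * Q * diagonal (fun j => if s j = 0 then (1 : ℝ) else 0) = 0 := by
      rw [← conjTranspose_mul_self_eq_zero, conjTranspose_eq_transpose_of_trivial, gram,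
        diagonal_eq_zero]
      ext j
      by_cases h : s j = 0 <;> simp [h]
    have hXQ1 : X * Q * diagonal (fun j => s⁻¹ j * s j) = X * Q := by
      calc _ = X * Q * diagonal (fun j => s⁻¹ j * s j) +
            X * Q * diagonal (fun j => if s j = 0 then (1 : ℝ) else 0) := by rw [hker, add_zero]
        _ = X * Q := by
          rw [← Matrix.mul_add, diagonal_add]
          convert Matrix.mul_one (X * Q)
          rw [← diagonal_one]; congr 1; ext j
          by_cases h : s j = 0 <;> simp [h]
    rw [Matrix.mul_assoc (X * Q), diagonal_mul_diagonal, hXQ1, Matrix.mul_assoc,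
      mul_eq_one_comm.mp hQ, Matrix.mul_one]

end SVD

section Holder

variable {n₁ n₂ : ℕ} {r k : Type*} [Fintype r] [Fintype k] [DecidableEq r] [DecidableEq k]

lemma mInner_mul_diagonal_mul_transpose (U : Matrix (Fin n₁) r ℝ) (V : Matrix (Fin n₂) r ℝ)
    (P : Matrix (Fin n₁) k ℝ) (Q : Matrix (Fin n₂) k ℝ) (c : r → ℝ) (s : k → ℝ) :
    mInner (U * diagonal c * Vᵀ) (P * diagonal s * Qᵀ) =
      ∑ i, ∑ j, c i * s j * ((Uᵀ * P) i j * (Vᵀ * Q) i j) := by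
  have hcyc : (U * diagonal c * Vᵀ)ᵀ * (P * diagonal s * Qᵀ) =
      V * (diagonal c * (Uᵀ * P) * diagonal s * Qᵀ) := by
    simp only [transpose_mul, transpose_transpose, diagonal_transpose, Matrix.mul_assoc]
  have hV : diagonal c * (Uᵀ * P) * diagonal s * Qᵀ * V =
      diagonal c * (Uᵀ * P) * diagonal s * (Vᵀ * Q)ᵀ := by
    rw [transpose_mul, transpose_transpose, Matrix.mul_assoc _ Qᵀ]
  rw [mInner_eq_trace, hcyc, trace_mul_comm, hV]
  generalize Uᵀ * P = G; generalize Vᵀ * Q = H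
  simp only [trace, diag_apply, mul_apply (N := Hᵀ), mul_diagonal, diagonal_mul, transpose_apply]
  exact Finset.sum_congr rfl fun i _ => Finset.sum_congr rfl fun j _ => by ring

lemma mul_mul_le_mul_add_sq_div_two {c a b B : ℝ} (hc : |c| ≤ B) :
    c * (a * b) ≤ B * ((a ^ 2 + b ^ 2) / 2) := by
  have hab : |a * b| ≤ (a ^ 2 + b ^ 2) / 2 := by
    rw [abs_le]; constructor <;> nlinarith [sq_nonneg (a + b), sq_nonneg (a - b)]
  calc c * (a * b) ≤ |c| * |a * b| := by rw [← abs_mul]; exact le_abs_self _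
    _ ≤ B * ((a ^ 2 + b ^ 2) / 2) := mul_le_mul hc hab (abs_nonneg _) ((abs_nonneg c).trans hc)

theorem mInner_mul_diagonal_mul_transpose_le {U : Matrix (Fin n₁) r ℝ} {V : Matrix (Fin n₂) r ℝ}
    {P : Matrix (Fin n₁) k ℝ} {Q : Matrix (Fin n₂) k ℝ} {c : r → ℝ} {s : k → ℝ} {B : ℝ}
    (hU : HasContractiveOrthogonalColumns U) (hV : HasContractiveOrthogonalColumns V)
    (hP : HasContractiveOrthogonalColumns P) (hQ : HasContractiveOrthogonalColumns Q)
    (hB : 0 ≤ B) (hc : ∀ i, |c i| ≤ B) (hs : ∀ j, 0 ≤ s j) :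
    mInner (U * diagonal c * Vᵀ) (P * diagonal s * Qᵀ) ≤ B * ∑ j, s j := by
  rw [mInner_mul_diagonal_mul_transpose, Finset.sum_comm, Finset.mul_sum]
  refine Finset.sum_le_sum fun j _ => ?_
  set G := Uᵀ * P
  set H := Vᵀ * Q
  have hG : ∑ i, G i j ^ 2 ≤ 1 := hU.sum_sq_transpose_mul_le hP j
  have hH : ∑ i, H i j ^ 2 ≤ 1 := hV.sum_sq_transpose_mul_le hQ j
  calc ∑ i, c i * s j * (G i j * H i j)
      ≤ ∑ i, s j * (B * ((G i j ^ 2 + H i j ^ 2) / 2)) := Finset.sum_le_sum fun i _ => by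
        rw [mul_comm (c i), mul_assoc]
        exact mul_le_mul_of_nonneg_left (mul_mul_le_mul_add_sq_div_two (hc i)) (hs j)
    _ = s j * (B * ((∑ i, G i j ^ 2 + ∑ i, H i j ^ 2) / 2)) := by
        rw [← Finset.sum_add_distrib, Finset.sum_div, Finset.mul_sum, Finset.mul_sum]
    _ ≤ B * s j := by nlinarith [hs j, mul_nonneg hB (hs j)]

end Holder

section Nuclear
variable {n₁ n₂ : ℕ} {r : Type*} [Fintype r] [DecidableEq r]

lemma singVal_nonneg (X : Matrix (Fin n₁) (Fin n₂) ℝ) (j : Fin n₂) : 0 ≤ singVal X j :=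
  Real.sqrt_nonneg _

theorem mInner_le_mul_nuclearNorm {U : Matrix (Fin n₁) r ℝ} {V : Matrix (Fin n₂) r ℝ}
    {c : r → ℝ} {B : ℝ} (hU : HasContractiveOrthogonalColumns U)
    (hV : HasContractiveOrthogonalColumns V) (hB : 0 ≤ B) (hc : ∀ i, |c i| ≤ B)
    (X : Matrix (Fin n₁) (Fin n₂) ℝ) : mInner (U * diagonal c * Vᵀ) X ≤ B * nuclearNorm X := by
  obtain ⟨P, Q, hP, hQ, hX⟩ := exists_svd X
  calc mInner (U * diagonal c * Vᵀ) X
      = mInner (U * diagonal c * Vᵀ) (P * diagonal (singVal X) * Qᵀ) := congrArg _ hX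
    _ ≤ B * nuclearNorm X :=
      mInner_mul_diagonal_mul_transpose_le hU hV
        (.of_transpose_mul_self_eq_diagonal_ite hP)
        (.of_transpose_mul_self_eq_one hQ) hB hc (singVal_nonneg X)

theorem nuclearNorm_mul_diagonal_mul_transpose_le {U : Matrix (Fin n₁) r ℝ}
    {V : Matrix (Fin n₂) r ℝ} {d : r → ℝ} (hU : HasContractiveOrthogonalColumns U)
    (hV : HasContractiveOrthogonalColumns V) (hd : ∀ i, 0 ≤ d i) :
    nuclearNorm (U * diagonal d * Vᵀ) ≤ ∑ i, d i := by
  set D := U * diagonal d * Vᵀ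
  obtain ⟨P, Q, hP, hQ, hD⟩ := exists_svd D
  -- pairing `D` with the partial isometry `P Qᵀ` of its polar decomposition gives `‖D‖_*`
  have hpolar : mInner (P * diagonal (1 : Fin n₂ → ℝ) * Qᵀ) D = nuclearNorm D := by
    calc mInner (P * diagonal (1 : Fin n₂ → ℝ) * Qᵀ) D
        = mInner (P * diagonal (1 : Fin n₂ → ℝ) * Qᵀ) (P * diagonal (singVal D) * Qᵀ) :=
          congrArg _ hD
      _ = nuclearNorm D := by
        rw [mInner_mul_diagonal_mul_transpose, hP, hQ, nuclearNorm]
        refine Finset.sum_congr rfl fun j _ => ?_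
        by_cases h : singVal D j = 0 <;> simp [diagonal_apply, one_apply, h]
  calc nuclearNorm D = mInner (P * diagonal (1 : Fin n₂ → ℝ) * Qᵀ) D := hpolar.symm
    _ ≤ 1 * ∑ i, d i :=
      mInner_mul_diagonal_mul_transpose_le
        (.of_transpose_mul_self_eq_diagonal_ite hP)
        (.of_transpose_mul_self_eq_one hQ) hU hV zero_le_one (fun _ => by simp) hd
    _ = ∑ i, d i := one_mul _

end Nuclear

section Proximal
variable {n₁ n₂ : ℕ}

theorem add_frob_sub_sq_le_of_isSubgradAt {h : Matrix (Fin n₁) (Fin n₂) ℝ → ℝ}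
    {A D : Matrix (Fin n₁) (Fin n₂) ℝ} (hsub : IsSubgradAt h (A - D) D)
    (X : Matrix (Fin n₁) (Fin n₂) ℝ) :
    h D + 1 / 2 * frob (D - A) ^ 2 + 1 / 2 * frob (X - D) ^ 2 ≤ h X + 1 / 2 * frob (X - A) ^ 2 := by
  rw [frob_sub_sq_eq X A D]
  linarith [hsub X]

theorem isMinOn_iff_eq_of_isSubgradAt {h : Matrix (Fin n₁) (Fin n₂) ℝ → ℝ}
    {A D : Matrix (Fin n₁) (Fin n₂) ℝ} (hsub : IsSubgradAt h (A - D) D)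
    (X₀ : Matrix (Fin n₁) (Fin n₂) ℝ) :
    IsMinOn (fun X => h X + 1 / 2 * frob (X - A) ^ 2) Set.univ X₀ ↔ X₀ = D := by
  rw [isMinOn_univ_iff]
  constructor
  · intro hmin
    have hsq : frob (X₀ - D) ^ 2 = 0 := le_antisymm
      (by linarith [hmin D, add_frob_sub_sq_le_of_isSubgradAt hsub X₀]) (sq_nonneg _)
    exact sub_eq_zero.mp (eq_zero_of_frob_sq_eq_zero hsq)
  · rintro rfl X
    linarith [add_frob_sub_sq_le_of_isSubgradAt hsub X, sq_nonneg (frob (X - X₀))]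

lemma ftau_add_mInner_projSet_sub_eq (τ : ℝ) (Ω : Finset (Fin n₁ × Fin n₂))
    (M Y X : Matrix (Fin n₁) (Fin n₂) ℝ) :
    ftau τ X + mInner Y (projSet Ω (M - X)) =
      τ * nuclearNorm X + 1 / 2 * frob (X - projSet Ω Y) ^ 2 +
        (mInner Y (projSet Ω M) - 1 / 2 * frob (projSet Ω Y) ^ 2) := by
  simp only [ftau, add_assoc, add_right_inj]
  simp only [frob_sq, mInner, projSet, of_apply, Matrix.sub_apply, Finset.mul_sum,
    ← Finset.sum_add_distrib, ← Finset.sum_sub_distrib]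
  refine Finset.sum_congr rfl fun i _ => Finset.sum_congr rfl fun j _ => ?_
  split_ifs <;> ring

end Proximal

section Shrinkage
variable {n₁ n₂ : ℕ} {r : Type*} [Fintype r] [DecidableEq r]

theorem isSubgradAt_nuclearNorm_shrinkage {U : Matrix (Fin n₁) r ℝ} {V : Matrix (Fin n₂) r ℝ}
    {σ : r → ℝ} {τ : ℝ} (hτ : 0 ≤ τ) (hσ : ∀ i, 0 ≤ σ i) (hU : Uᵀ * U = 1) (hV : Vᵀ * V = 1) :
    IsSubgradAt (fun X => τ * nuclearNorm X)
      (U * diagonal σ * Vᵀ - U * diagonal (fun i => max (σ i - τ) 0) * Vᵀ)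
      (U * diagonal (fun i => max (σ i - τ) 0) * Vᵀ) := by
  set d := fun i => max (σ i - τ) 0
  have hW : U * diagonal σ * Vᵀ - U * diagonal d * Vᵀ =
      U * diagonal (fun i => min (σ i) τ) * Vᵀ := by
    rw [← Matrix.sub_mul, ← Matrix.mul_sub, diagonal_sub]
    congr 3; ext i
    rw [← min_sub_sub_left, sub_sub_cancel, sub_zero, min_comm]
  -- `dᵢ ≠ 0` only where `σᵢ > τ`, so `⟨W, D⟩ = ∑ min(σᵢ, τ) dᵢ = τ ∑ dᵢ`
  have hWD : mInner (U * diagonal (fun i => min (σ i) τ) * Vᵀ) (U * diagonal d * Vᵀ) =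
      τ * ∑ i, d i := by
    rw [mInner_mul_diagonal_mul_transpose, hU, hV, Finset.mul_sum]
    refine Finset.sum_congr rfl fun i _ => ?_
    simp only [one_apply, mul_ite, mul_one, mul_zero, Finset.sum_ite_eq,
      Finset.mem_univ, if_true]
    rcases le_total (σ i) τ with h | h
    · simp [d, h]
    · rw [min_eq_right h]
  have hU' := HasContractiveOrthogonalColumns.of_transpose_mul_self_eq_one hU
  have hV' := HasContractiveOrthogonalColumns.of_transpose_mul_self_eq_one hV
  have hWX := mInner_le_mul_nuclearNorm (c := fun i => min (σ i) τ) hU' hV' hτ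
    (fun i => abs_le.mpr ⟨le_min (by linarith [hσ i]) (by linarith), min_le_right _ _⟩)
  have hD := nuclearNorm_mul_diagonal_mul_transpose_le hU' hV' (fun i => le_max_right (σ i - τ) 0)
  intro X
  rw [hW, mInner_sub_right, hWD]
  nlinarith [hWX X, mul_le_mul_of_nonneg_left hD hτ]

end Shrinkage

/-- For any `Y`, `τ > 0`, `M` and sampled set `Ω`, the minimizers of
`X ↦ f_τ(X) + ⟨Y, P_Ω(M - X)⟩` coincide with the minimizers of
`X ↦ τ‖X‖_* + (1/2)‖X - P_Ω(Y)‖_F²`, and the (unique) minimizer is `D_τ(P_Ω(Y))`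
(expressed through a reduced SVD of `P_Ω(Y)`). -/
theorem lagrangian_minimizer_is_shrinkage (n₁ n₂ r : ℕ) (τ : ℝ) (hτ : 0 < τ)
    (Ω : Finset (Fin n₁ × Fin n₂)) (M Y : Matrix (Fin n₁) (Fin n₂) ℝ)
    (U : Matrix (Fin n₁) (Fin r) ℝ) (V : Matrix (Fin n₂) (Fin r) ℝ) (σ : Fin r → ℝ)
    (hσ : ∀ i, 0 < σ i) (hU : Uᵀ * U = 1) (hV : Vᵀ * V = 1)
    (hSVD : projSet Ω Y = U * Matrix.diagonal σ * Vᵀ)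
    (D : Matrix (Fin n₁) (Fin n₂) ℝ)
    (hD : D = U * Matrix.diagonal (fun i => max (σ i - τ) 0) * Vᵀ) :
    (∀ X₀ : Matrix (Fin n₁) (Fin n₂) ℝ,
      IsMinOn (fun X => ftau τ X + mInner Y (projSet Ω (M - X))) Set.univ X₀ ↔
      IsMinOn (fun X => τ * nuclearNorm X + (1 / 2) * frob (X - projSet Ω Y) ^ 2)
        Set.univ X₀) ∧
    IsMinOn (fun X => ftau τ X + mInner Y (projSet Ω (M - X))) Set.univ D ∧
    (∀ X₀ : Matrix (Fin n₁) (Fin n₂) ℝ,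
      IsMinOn (fun X => ftau τ X + mInner Y (projSet Ω (M - X))) Set.univ X₀ → X₀ = D) := by
  have hsub := isSubgradAt_nuclearNorm_shrinkage hτ.le (fun i => (hσ i).le) hU hV
  rw [← hSVD, ← hD] at hsub
  have hiff : ∀ X₀ : Matrix (Fin n₁) (Fin n₂) ℝ,
      IsMinOn (fun X => ftau τ X + mInner Y (projSet Ω (M - X))) Set.univ X₀ ↔
      IsMinOn (fun X => τ * nuclearNorm X + (1 / 2) * frob (X - projSet Ω Y) ^ 2)
        Set.univ X₀ := fun X₀ => by
    simp only [isMinOn_univ_iff, ftau_add_mInner_projSet_sub_eq, add_le_add_iff_right]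
  have huniq := isMinOn_iff_eq_of_isSubgradAt hsub
  exact ⟨hiff, (hiff D).2 ((huniq D).2 rfl), fun X₀ hX₀ => (huniq X₀).1 ((hiff X₀).1 hX₀)⟩
end

section
/- With X_τ* the solution of the proximal problem (minimize τ‖X‖_* + (1/2)‖X‖_F² over the feasible set C) and X_∞ the minimum Frobenius-norm nuclear-norm minimizer over C, one has ‖X_τ*‖_F ≤ ‖X_∞‖_F for every τ > 0; in particular the family {X_τ*} is bounded in Frobenius norm uniformly in τ. -/
open Matrix Filter Topology

theorem frob_nonneg {n₁ n₂ : ℕ} (X : Matrix (Fin n₁) (Fin n₂) ℝ) : 0 ≤ frob X :=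
  Real.sqrt_nonneg _

theorem frob_le_of_ftau_le_of_nuclearNorm_le {n₁ n₂ : ℕ} {τ : ℝ} (hτ : 0 ≤ τ)
    {X Y : Matrix (Fin n₁) (Fin n₂) ℝ} (hf : ftau τ X ≤ ftau τ Y)
    (hnuc : nuclearNorm Y ≤ nuclearNorm X) : frob X ≤ frob Y := by
  have hsq : frob X ^ 2 ≤ frob Y ^ 2 := by
    unfold ftau at hf
    nlinarith [mul_le_mul_of_nonneg_left hnuc hτ]
  exact (sq_le_sq₀ (frob_nonneg X) (frob_nonneg Y)).1 hsq

theorem prox_solutions_bounded_general (n₁ n₂ : ℕ) (C : Set (Matrix (Fin n₁) (Fin n₂) ℝ))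
    (Xstar : ℝ → Matrix (Fin n₁) (Fin n₂) ℝ)
    (hXstar : ∀ τ : ℝ, 0 < τ → Xstar τ ∈ C ∧ ∀ Z ∈ C, ftau τ (Xstar τ) ≤ ftau τ Z)
    (Xinf : Matrix (Fin n₁) (Fin n₂) ℝ)
    (hXinf : Xinf ∈ C)
    (hXinf_min : ∀ Z ∈ C, nuclearNorm Xinf ≤ nuclearNorm Z) :
    (∀ τ : ℝ, 0 < τ → frob (Xstar τ) ≤ frob Xinf) ∧
    ∃ B : ℝ, ∀ τ : ℝ, 0 < τ → frob (Xstar τ) ≤ B := by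
  have hbound : ∀ τ : ℝ, 0 < τ → frob (Xstar τ) ≤ frob Xinf := fun τ hτ =>
    frob_le_of_ftau_le_of_nuclearNorm_le hτ.le ((hXstar τ hτ).2 Xinf hXinf)
      (hXinf_min _ (hXstar τ hτ).1)
  exact ⟨hbound, frob Xinf, hbound⟩

/-- With `X_τ*` solving the proximal problem over the feasible set `C` and
`X_∞` the minimum Frobenius-norm nuclear-norm minimizer over `C`, one has
`‖X_τ*‖_F ≤ ‖X_∞‖_F` for all `τ > 0`; in particular `{X_τ*}` is bounded in Frobenius
norm uniformly in `τ`. -/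
theorem prox_solutions_bounded (n₁ n₂ : ℕ) (C : Set (Matrix (Fin n₁) (Fin n₂) ℝ))
    (hC : C.Nonempty) (hCconv : Convex ℝ C)
    (Xstar : ℝ → Matrix (Fin n₁) (Fin n₂) ℝ)
    (hXstar : ∀ τ : ℝ, 0 < τ → Xstar τ ∈ C ∧ ∀ Z ∈ C, ftau τ (Xstar τ) ≤ ftau τ Z)
    (Xinf : Matrix (Fin n₁) (Fin n₂) ℝ)
    (hXinf : Xinf ∈ C)
    (hXinf_min : ∀ Z ∈ C, nuclearNorm Xinf ≤ nuclearNorm Z)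
    (hXinf_frob : ∀ Z ∈ C, nuclearNorm Z = nuclearNorm Xinf → frob Xinf ≤ frob Z) :
    (∀ τ : ℝ, 0 < τ → frob (Xstar τ) ≤ frob Xinf) ∧
    ∃ B : ℝ, ∀ τ : ℝ, 0 < τ → frob (Xstar τ) ≤ B :=
  prox_solutions_bounded_general n₁ n₂ C Xstar hXstar Xinf hXinf hXinf_min
end

section
/- With X_τ* the solution of the proximal problem (minimize τ‖X‖_* + (1/2)‖X‖_F² over the feasible set C) and X_∞ the minimum Frobenius-norm nuclear-norm minimizer over C, the nuclear norms converge: lim_{τ→∞} ‖X_τ*‖_* = ‖X_∞‖_*. -/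
open Matrix Filter Topology

/- A minimizer `y` of `τ f + g` with `g y ≥ 0` beats the minimizer `x₀` of `f` in `f` by at most
`g x₀ / τ`, while `f y ≥ f x₀`; squeezing gives `f y → f x₀` as `τ → ∞`. -/

lemma le_add_div_of_mul_add_le {a b c d τ : ℝ} (hτ : 0 < τ) (hb : 0 ≤ b)
    (h : τ * a + b ≤ τ * c + d) : a ≤ c + d / τ := by
  rw [← sub_le_iff_le_add', le_div_iff₀ hτ]
  linarith

theorem tendsto_of_minimizes_mul_add {α : Type*} (f g : α → ℝ) (s : Set α) (hg : ∀ z, 0 ≤ g z)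
    (x : ℝ → α) (hx : ∀ τ, 0 < τ → x τ ∈ s ∧ ∀ z ∈ s, τ * f (x τ) + g (x τ) ≤ τ * f z + g z)
    (x₀ : α) (hx₀ : x₀ ∈ s) (hx₀_min : ∀ z ∈ s, f x₀ ≤ f z) :
    Tendsto (fun τ => f (x τ)) atTop (𝓝 (f x₀)) := by
  have upper : Tendsto (fun τ => f x₀ + g x₀ / τ) atTop (𝓝 (f x₀)) := by
    have decay : Tendsto (fun τ : ℝ => g x₀ / τ) atTop (𝓝 0) :=
      tendsto_const_nhds.div_atTop tendsto_id
    simpa using decay.const_add (f x₀)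
  refine tendsto_of_tendsto_of_tendsto_of_le_of_le' tendsto_const_nhds upper ?_ ?_
  · filter_upwards [eventually_gt_atTop 0] with τ hτ
    exact hx₀_min _ (hx τ hτ).1
  · filter_upwards [eventually_gt_atTop 0] with τ hτ
    exact le_add_div_of_mul_add_le hτ (hg _) ((hx τ hτ).2 x₀ hx₀)

theorem prox_nuclearNorm_tendsto_general (n₁ n₂ : ℕ) (C : Set (Matrix (Fin n₁) (Fin n₂) ℝ))
    (Xstar : ℝ → Matrix (Fin n₁) (Fin n₂) ℝ)
    (hXstar : ∀ τ : ℝ, 0 < τ → Xstar τ ∈ C ∧ ∀ Z ∈ C, ftau τ (Xstar τ) ≤ ftau τ Z)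
    (Xinf : Matrix (Fin n₁) (Fin n₂) ℝ)
    (hXinf : Xinf ∈ C)
    (hXinf_min : ∀ Z ∈ C, nuclearNorm Xinf ≤ nuclearNorm Z) :
    Tendsto (fun τ : ℝ => nuclearNorm (Xstar τ)) atTop (nhds (nuclearNorm Xinf)) :=
  tendsto_of_minimizes_mul_add nuclearNorm (fun X => 1 / 2 * frob X ^ 2) C (fun _ => by positivity)
    Xstar hXstar Xinf hXinf hXinf_min

/-- With `X_τ*` solving the proximal problem over `C` and `X_∞` the minimum
Frobenius-norm nuclear-norm minimizer over `C`, the nuclear norms converge: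
`lim_{τ→∞} ‖X_τ*‖_* = ‖X_∞‖_*`. -/
theorem prox_nuclearNorm_tendsto (n₁ n₂ : ℕ) (C : Set (Matrix (Fin n₁) (Fin n₂) ℝ))
    (hC : C.Nonempty) (hCconv : Convex ℝ C)
    (Xstar : ℝ → Matrix (Fin n₁) (Fin n₂) ℝ)
    (hXstar : ∀ τ : ℝ, 0 < τ → Xstar τ ∈ C ∧ ∀ Z ∈ C, ftau τ (Xstar τ) ≤ ftau τ Z)
    (Xinf : Matrix (Fin n₁) (Fin n₂) ℝ)
    (hXinf : Xinf ∈ C)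
    (hXinf_min : ∀ Z ∈ C, nuclearNorm Xinf ≤ nuclearNorm Z)
    (hXinf_frob : ∀ Z ∈ C, nuclearNorm Z = nuclearNorm Xinf → frob Xinf ≤ frob Z) :
    Tendsto (fun τ : ℝ => nuclearNorm (Xstar τ)) atTop (nhds (nuclearNorm Xinf)) :=
  prox_nuclearNorm_tendsto_general n₁ n₂ C Xstar hXstar Xinf hXinf hXinf_min
end

section
/- In the setting of Uzawa iterations for the general convex-constrained problem, let (X*, y*) be primal-dual optimal and let (X^k, y^k) be the iterates with y^k = [y^{k−1} + δ_k F(X^k)]₊. If ⟨y^{k−1} − y*, F(X^k) − F(X*)⟩ ≤ −‖X^k − X*‖_F², F is L-Lipschitz in the sense ‖F(X) − F(Y)‖ ≤ L‖X − Y‖_F, and 2δ_k − δ_k²L² ≥ β > 0, then ‖y^k − y*‖² ≤ ‖y^{k−1} − y*‖² − β‖X^k − X*‖_F². -/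
open Matrix Filter Topology

/-!
Projection onto the nonnegative orthant is nonexpansive, so `‖y^k - y*‖` is at most
`‖(y^{k-1} - y*) + δ (F(X^k) - F(X*))‖`. Expanding that square, the cross term is bounded by the
monotonicity hypothesis and the quadratic term by the Lipschitz bound.
-/

open scoped RealInnerProductSpace

theorem norm_add_smul_sq_le_of_inner_le {E : Type*} [NormedAddCommGroup E]
    [InnerProductSpace ℝ E] {u d : E} {δ L r : ℝ} (hδ : 0 ≤ δ)
    (hinner : ⟪u, d⟫ ≤ -r ^ 2) (hd : ‖d‖ ≤ L * r) :
    ‖u + δ • d‖ ^ 2 ≤ ‖u‖ ^ 2 - (2 * δ - δ ^ 2 * L ^ 2) * r ^ 2 := by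
  have hd_sq : ‖d‖ ^ 2 ≤ L ^ 2 * r ^ 2 := by
    rw [← mul_pow]; exact pow_le_pow_left₀ (norm_nonneg d) hd 2
  rw [norm_add_sq_real, real_inner_smul_right, norm_smul, mul_pow, Real.norm_eq_abs, sq_abs]
  nlinarith [mul_le_mul_of_nonneg_left hinner hδ, mul_le_mul_of_nonneg_left hd_sq (sq_nonneg δ)]

theorem eNorm_eq_norm_toLp {m : ℕ} (v : Fin m → ℝ) :
    eNorm v = ‖(WithLp.toLp 2 v : EuclideanSpace ℝ (Fin m))‖ := by
  simp [eNorm, EuclideanSpace.norm_eq]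

theorem eInner_eq_inner_toLp {m : ℕ} (v w : Fin m → ℝ) :
    eInner v w = ⟪(WithLp.toLp 2 v : EuclideanSpace ℝ (Fin m)), WithLp.toLp 2 w⟫ := by
  simp [eInner, PiLp.inner_apply, mul_comm]

theorem eNorm_le_of_abs_le {m : ℕ} {v w : Fin m → ℝ} (h : ∀ i, |v i| ≤ |w i|) :
    eNorm v ≤ eNorm w :=
  Real.sqrt_le_sqrt <| Finset.sum_le_sum fun i _ => sq_le_sq.mpr (h i)

theorem eNorm_posPart_sub_le {m : ℕ} (v w : Fin m → ℝ) :
    eNorm ((fun i => max (v i) 0) - fun i => max (w i) 0) ≤ eNorm (v - w) :=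
  eNorm_le_of_abs_le fun i => abs_max_sub_max_le_abs (v i) (w i) 0

/-- One step of the Uzawa convergence argument. If
`y^k = [y^{k-1} + δF(X^k)]₊`, `y* = [y* + δF(X*)]₊`,
`⟨y^{k-1} - y*, F(X^k) - F(X*)⟩ ≤ -‖X^k - X*‖_F²`, `F` is `L`-Lipschitz and
`2δ - δ²L² ≥ β > 0`, then `‖y^k - y*‖² ≤ ‖y^{k-1} - y*‖² - β‖X^k - X*‖_F²`. -/
theorem uzawa_step_inequality (n₁ n₂ m : ℕ) (δ β L : ℝ)
    (F : Matrix (Fin n₁) (Fin n₂) ℝ → Fin m → ℝ)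
    (Xk Xs : Matrix (Fin n₁) (Fin n₂) ℝ) (ykm ys yk : Fin m → ℝ)
    (hyk : yk = fun i => max (ykm i + δ * F Xk i) 0)
    (hys : ys = fun i => max (ys i + δ * F Xs i) 0)
    (hmono : eInner (ykm - ys) (fun i => F Xk i - F Xs i) ≤ -(frob (Xk - Xs) ^ 2))
    (hLip : ∀ A B : Matrix (Fin n₁) (Fin n₂) ℝ,
      eNorm (fun i => F A i - F B i) ≤ L * frob (A - B))
    (hβ : 0 < β) (hδβ : β ≤ 2 * δ - δ ^ 2 * L ^ 2) :
    eNorm (yk - ys) ^ 2 ≤ eNorm (ykm - ys) ^ 2 - β * frob (Xk - Xs) ^ 2 := by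
  set d : Fin m → ℝ := fun i => F Xk i - F Xs i
  have hδ : 0 ≤ δ := by nlinarith [sq_nonneg (δ * L)]
  have hstep : ykm + δ • F Xk - (ys + δ • F Xs) = ykm - ys + δ • d := by
    ext i; simp only [d, Pi.add_apply, Pi.sub_apply, Pi.smul_apply, smul_eq_mul]; ring
  have hcontract : eNorm (yk - ys) ≤ eNorm (ykm - ys + δ • d) := by
    rw [← hstep, congrArg₂ (· - ·) hyk hys]
    exact eNorm_posPart_sub_le (ykm + δ • F Xk) (ys + δ • F Xs)
  have hdescent :
      eNorm (ykm - ys + δ • d) ^ 2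
        ≤ eNorm (ykm - ys) ^ 2 - (2 * δ - δ ^ 2 * L ^ 2) * frob (Xk - Xs) ^ 2 := by
    rw [eNorm_eq_norm_toLp, eNorm_eq_norm_toLp, WithLp.toLp_add, WithLp.toLp_smul]
    rw [eInner_eq_inner_toLp] at hmono
    have hd := hLip Xk Xs
    rw [eNorm_eq_norm_toLp] at hd
    exact norm_add_smul_sq_le_of_inner_le hδ hmono hd
  calc eNorm (yk - ys) ^ 2 ≤ eNorm (ykm - ys + δ • d) ^ 2 :=
        pow_le_pow_left₀ (Real.sqrt_nonneg _) hcontract 2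
    _ ≤ _ := hdescent
    _ ≤ _ := by gcongr
end

section
/- The singular value shrinkage operator is well defined: if X ∈ ℝ^{n₁×n₂} admits two reduced singular value decompositions X = U Σ V* = U' Σ V'* (with the same singular values σ₁ ≥ … ≥ σ_r > 0), then U diag((σ_i − τ)₊) V* = U' diag((σ_i − τ)₊) V'* for every τ ≥ 0; i.e., D_τ(X) does not depend on the choice of SVD. -/
open Matrix Filter Topology

/-!
On the span of the right singular vectors, `Xᵀ X = V diag(σ²) Vᵀ`, so for every polynomial `q`
the matrix `X q(Xᵀ X)` equals `U diag(σᵢ q(σᵢ²)) Vᵀ`: it is expressed through `X` alone. Since the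
`σᵢ` are positive, `σ ↦ σ²` is injective on them, and Lagrange interpolation gives a `q` with
`σᵢ q(σᵢ²) = φ(σᵢ)` for any prescribed `φ`. Hence `U diag(φ(σᵢ)) Vᵀ` depends only on `X`.
-/

namespace Matrix

variable {R : Type*} [CommRing R] {l m n ι : Type*} [Fintype ι] [DecidableEq ι] [Fintype m]

theorem mul_diagonal_mul_transpose_mul_mul_diagonal_mul_transpose
    (U : Matrix l ι R) (V : Matrix m ι R) (W : Matrix n ι R) (hV : Vᵀ * V = 1) (a b : ι → R) :
    U * diagonal a * Vᵀ * (V * diagonal b * Wᵀ) = U * diagonal (a * b) * Wᵀ := by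
  simp only [Matrix.mul_assoc]
  rw [← Matrix.mul_assoc Vᵀ, hV, Matrix.one_mul, ← Matrix.mul_assoc (diagonal a),
    diagonal_mul_diagonal]
  rfl

variable (U : Matrix m ι R) (V : Matrix n ι R) (σ : ι → R)

theorem transpose_mul_self_of_svd (hU : Uᵀ * U = 1) :
    (U * diagonal σ * Vᵀ)ᵀ * (U * diagonal σ * Vᵀ) = V * diagonal (σ ^ 2) * Vᵀ := by
  rw [transpose_mul, transpose_mul, transpose_transpose, diagonal_transpose, ← Matrix.mul_assoc V,
    mul_diagonal_mul_transpose_mul_mul_diagonal_mul_transpose V U V hU, sq]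

variable [Fintype n] [DecidableEq n]

theorem mul_transpose_mul_self_pow_of_svd (hU : Uᵀ * U = 1) (hV : Vᵀ * V = 1) (k : ℕ) :
    U * diagonal σ * Vᵀ * ((U * diagonal σ * Vᵀ)ᵀ * (U * diagonal σ * Vᵀ)) ^ k =
      U * diagonal (σ * (σ ^ 2) ^ k) * Vᵀ := by
  induction k with
  | zero => simp
  | succ k ih =>
    rw [pow_succ, ← Matrix.mul_assoc, ih, transpose_mul_self_of_svd U V σ hU,
      mul_diagonal_mul_transpose_mul_mul_diagonal_mul_transpose U V V hV, pow_succ (σ ^ 2),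
      mul_assoc σ]

theorem mul_aeval_transpose_mul_self_of_svd (hU : Uᵀ * U = 1) (hV : Vᵀ * V = 1)
    (q : Polynomial R) :
    U * diagonal σ * Vᵀ * Polynomial.aeval ((U * diagonal σ * Vᵀ)ᵀ * (U * diagonal σ * Vᵀ)) q =
      U * diagonal (fun i => σ i * q.eval (σ i ^ 2)) * Vᵀ := by
  induction q using Polynomial.induction_on' with
  | add p q hp hq =>
    simp only [map_add, Matrix.mul_add, hp, hq, Polynomial.eval_add, mul_add, ← Matrix.add_mul,
      ← diagonal_add]
  | monomial k a =>
    have hdiag : (fun i => σ i * (Polynomial.monomial k a).eval (σ i ^ 2)) =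
        a • (σ * (σ ^ 2) ^ k) := by
      ext i
      simp only [Polynomial.eval_monomial, Pi.smul_apply, Pi.mul_apply, Pi.pow_apply, smul_eq_mul]
      ring
    rw [Polynomial.aeval_monomial, ← Algebra.smul_def, Matrix.mul_smul,
      mul_transpose_mul_self_pow_of_svd U V σ hU hV k, hdiag, diagonal_smul, Matrix.mul_smul,
      Matrix.smul_mul]

end Matrix

open Matrix Polynomial

theorem exists_polynomial_mul_eval_sq_eq (φ : ℝ → ℝ) (s : Finset ℝ) (hs : ∀ x ∈ s, 0 < x) :
    ∃ q : ℝ[X], ∀ x ∈ s, x * q.eval (x ^ 2) = φ x := by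
  refine ⟨Lagrange.interpolate (s.image (· ^ 2)) id (fun y => φ (√y) / √y), fun x hx => ?_⟩
  have hnode := Lagrange.eval_interpolate_at_node (fun y => φ √y / √y) (Set.injOn_id _)
    (Finset.mem_image_of_mem (· ^ 2) hx)
  rw [id, Real.sqrt_sq (hs x hx).le] at hnode
  rw [hnode, mul_div_cancel₀ _ (hs x hx).ne']

theorem mul_diagonal_comp_mul_transpose_eq_of_svd_eq {m n ι : Type*} [Fintype m] [Fintype n]
    [DecidableEq n] [Fintype ι] [DecidableEq ι] (φ : ℝ → ℝ)
    (U U' : Matrix m ι ℝ) (V V' : Matrix n ι ℝ) (σ : ι → ℝ)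
    (hσ : ∀ i, 0 < σ i) (hU : Uᵀ * U = 1) (hV : Vᵀ * V = 1) (hU' : U'ᵀ * U' = 1)
    (hV' : V'ᵀ * V' = 1) (h : U * diagonal σ * Vᵀ = U' * diagonal σ * V'ᵀ) :
    U * diagonal (φ ∘ σ) * Vᵀ = U' * diagonal (φ ∘ σ) * V'ᵀ := by
  obtain ⟨q, hq⟩ := exists_polynomial_mul_eval_sq_eq φ (Finset.univ.image σ)
    (by simpa using hσ)
  have hφ : φ ∘ σ = fun i => σ i * q.eval (σ i ^ 2) :=
    funext fun i => (hq _ (Finset.mem_image_of_mem σ (Finset.mem_univ i))).symm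
  rw [hφ, ← mul_aeval_transpose_mul_self_of_svd U V σ hU hV,
    ← mul_aeval_transpose_mul_self_of_svd U' V' σ hU' hV', h]

theorem shrinkage_well_defined_general (n₁ n₂ r : ℕ) (τ : ℝ)
    (X : Matrix (Fin n₁) (Fin n₂) ℝ)
    (U U' : Matrix (Fin n₁) (Fin r) ℝ) (V V' : Matrix (Fin n₂) (Fin r) ℝ)
    (σ : Fin r → ℝ) (hσ : ∀ i, 0 < σ i)
    (hU : Uᵀ * U = 1) (hV : Vᵀ * V = 1) (hU' : U'ᵀ * U' = 1) (hV' : V'ᵀ * V' = 1)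
    (hX : X = U * Matrix.diagonal σ * Vᵀ) (hX' : X = U' * Matrix.diagonal σ * V'ᵀ) :
    U * Matrix.diagonal (fun i => max (σ i - τ) 0) * Vᵀ =
      U' * Matrix.diagonal (fun i => max (σ i - τ) 0) * V'ᵀ :=
  mul_diagonal_comp_mul_transpose_eq_of_svd_eq (fun s => max (s - τ) 0) U U' V V' σ hσ hU hV hU'
    hV' (hX.symm.trans hX')

/-- The singular value shrinkage operator is well defined: if `X` admits two
reduced SVDs `X = UΣVᵀ = U'ΣV'ᵀ` with the same (ordered, positive) singular values, then
`U diag((σᵢ - τ)₊) Vᵀ = U' diag((σᵢ - τ)₊) V'ᵀ` for every `τ ≥ 0`. -/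
theorem shrinkage_well_defined (n₁ n₂ r : ℕ) (τ : ℝ) (hτ : 0 ≤ τ)
    (X : Matrix (Fin n₁) (Fin n₂) ℝ)
    (U U' : Matrix (Fin n₁) (Fin r) ℝ) (V V' : Matrix (Fin n₂) (Fin r) ℝ)
    (σ : Fin r → ℝ) (hσ : ∀ i, 0 < σ i) (hord : Antitone σ)
    (hU : Uᵀ * U = 1) (hV : Vᵀ * V = 1) (hU' : U'ᵀ * U' = 1) (hV' : V'ᵀ * V' = 1)
    (hX : X = U * Matrix.diagonal σ * Vᵀ) (hX' : X = U' * Matrix.diagonal σ * V'ᵀ) :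
    U * Matrix.diagonal (fun i => max (σ i - τ) 0) * Vᵀ =
      U' * Matrix.diagonal (fun i => max (σ i - τ) 0) * V'ᵀ :=
  shrinkage_well_defined_general n₁ n₂ r τ X U U' V V' σ hσ hU hV hU' hV' hX hX'
end
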